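/- Let w₀ > 0 and let x, y, z : ℝ → ℝ be twice differentiable functions satisfying x'' = x·z', y'' = y·z', z'' = −(x·x' + y·y') with z'(t) = w₀ for all t. Then x ≡ 0 and y ≡ 0. -/

import Mathlib

/-!
Since `z'` is constant, `z'' = 0`, so the third equation says `x x' + y y' ≡ 0`, i.e.
`x² + y²` is constant. Differentiating once more and using the first two equations gives
`x'² + y'² + w₀ (x² + y²) = 0`, a sum of nonnegative terms, so `x = y = 0` as `w₀ > 0`.
-/

theorem hasDerivAt_mul_deriv {f : ℝ → ℝ} {t : ℝ} (hf : DifferentiableAt ℝ f t)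
    (hf' : DifferentiableAt ℝ (deriv f) t) :
    HasDerivAt (fun s => f s * deriv f s) (deriv f t * deriv f t + f t * deriv (deriv f) t) t :=
  hf.hasDerivAt.mul hf'.hasDerivAt

theorem no_trajectory_with_positive_vertical_speed_general (w₀ : ℝ) (hw₀ : 0 < w₀)
    (x y z : ℝ → ℝ)
    (hx : Differentiable ℝ x) (hx' : Differentiable ℝ (deriv x))
    (hy : Differentiable ℝ y) (hy' : Differentiable ℝ (deriv y))
    (h1 : ∀ t : ℝ, deriv (deriv x) t = x t * deriv z t)
    (h2 : ∀ t : ℝ, deriv (deriv y) t = y t * deriv z t)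
    (h3 : ∀ t : ℝ, deriv (deriv z) t = -(x t * deriv x t + y t * deriv y t))
    (hzp : ∀ t : ℝ, deriv z t = w₀) :
    ∀ t : ℝ, x t = 0 ∧ y t = 0 := by
  intro t
  have hz'' : ∀ s, deriv (deriv z) s = 0 := by simp [funext hzp]
  have hradial : ((fun s => x s * deriv x s) + fun s => y s * deriv y s) = fun _ => 0 :=
    funext fun s => by simp only [Pi.add_apply]; linarith [h3 s, hz'' s]
  have hderiv := (hasDerivAt_mul_deriv (hx t) (hx' t)).add (hasDerivAt_mul_deriv (hy t) (hy' t))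
  rw [hradial, h1, h2, hzp] at hderiv
  have henergy : 0 = deriv x t * deriv x t + x t * (x t * w₀)
      + (deriv y t * deriv y t + y t * (y t * w₀)) :=
    (hasDerivAt_const t (0 : ℝ)).unique hderiv
  have hsq : x t * x t + y t * y t = 0 := by
    nlinarith [mul_self_nonneg (deriv x t), mul_self_nonneg (deriv y t),
      mul_self_nonneg (x t), mul_self_nonneg (y t)]
  exact mul_self_add_mul_self_eq_zero.mp hsq

/-- No magnetic trajectory with constant positive `z'` exists away from the `z`-axis:
a solution of the system `x'' = x·z'`, `y'' = y·z'`, `z'' = −(x·x' + y·y')` with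
`z' ≡ w₀ > 0` has `x ≡ 0` and `y ≡ 0`. -/
theorem no_trajectory_with_positive_vertical_speed (w₀ : ℝ) (hw₀ : 0 < w₀)
    (x y z : ℝ → ℝ)
    (hx : Differentiable ℝ x) (hx' : Differentiable ℝ (deriv x))
    (hy : Differentiable ℝ y) (hy' : Differentiable ℝ (deriv y))
    (hz : Differentiable ℝ z) (hz' : Differentiable ℝ (deriv z))
    (h1 : ∀ t : ℝ, deriv (deriv x) t = x t * deriv z t)
    (h2 : ∀ t : ℝ, deriv (deriv y) t = y t * deriv z t)
    (h3 : ∀ t : ℝ, deriv (deriv z) t = -(x t * deriv x t + y t * deriv y t))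
    (hzp : ∀ t : ℝ, deriv z t = w₀) :
    ∀ t : ℝ, x t = 0 ∧ y t = 0 :=
  no_trajectory_with_positive_vertical_speed_general w₀ hw₀ x y z hx hx' hy hy' h1 h2 h3 hzp
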